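/- arXiv:2206.15273 — 7 statements merged into one kernel-verified Lean document; each statement's English description precedes it below -/
import Mathlib

section
/- Let V be a finite-dimensional real inner product space, let e : Fin d → V be a family of vectors (not necessarily linearly independent), let G be its Gram matrix, and let B be any generalized inverse of G. Let ω : V →ₗ[ℝ] ℝ be a linear functional and let v ∈ V be the vector satisfying ⟪v, w⟫ = ω w for all w ∈ V. Then the orthogonal projection of v onto the subspace Submodule.span ℝ (Set.range e) equals ∑ i, ∑ j, (B i j * ω (e j)) • e i. -/
/-!
Let `P` be the orthogonal projection onto the span of `e` and `G` the Gram matrix, so that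
`⟪e k, ∑ i, x i • e i⟫ = (G *ᵥ x) k`. Writing `P v = ∑ i, x i • e i`, orthogonality of `v - P v` to
every `e k` shows that `c := (⟪e k, v⟫)ₖ` equals `G *ᵥ x`. Then
`u := ∑ i, (B *ᵥ c) i • e i` satisfies `⟪e k, u⟫ = (G * B * G *ᵥ x) k = c k = ⟪e k, v⟫`, so `v - u` is
orthogonal to the span, and `u = P v` since `u` lies in it.
-/

open scoped RealInnerProductSpace InnerProductSpace

open Matrix Submodule

section

variable {𝕜 E ι : Type*} [RCLike 𝕜] [NormedAddCommGroup E] [InnerProductSpace 𝕜 E] (e : ι → E)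
  [(span 𝕜 (Set.range e)).HasOrthogonalProjection]

theorem starProjection_span_range_eq_of_inner_eq {u v : E} (hu : u ∈ span 𝕜 (Set.range e))
    (h : ∀ k, ⟪e k, u⟫_𝕜 = ⟪e k, v⟫_𝕜) : (span 𝕜 (Set.range e)).starProjection v = u := by
  refine eq_starProjection_of_mem_of_inner_eq_zero hu fun w hw => ?_
  rw [inner_eq_zero_symm]
  induction hw using span_induction with
  | mem _ hw => obtain ⟨k, rfl⟩ := hw; rw [inner_sub_right, h, sub_self]
  | zero => exact inner_zero_left _
  | add _ _ _ _ hw hw' => rw [inner_add_left, hw, hw', add_zero]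
  | smul a _ _ hw => rw [inner_smul_left, hw, mul_zero]

variable [Fintype ι]

omit [(span 𝕜 (Set.range e)).HasOrthogonalProjection] in
theorem inner_sum_smul_eq_gram_mulVec (x : ι → 𝕜) (k : ι) :
    ⟪e k, ∑ i, x i • e i⟫_𝕜 = (gram 𝕜 e *ᵥ x) k := by
  simp only [inner_sum, inner_smul_right, mulVec, dotProduct, gram_apply, mul_comm]

theorem exists_gram_mulVec_eq_inner (v : E) : ∃ x, gram 𝕜 e *ᵥ x = fun k => ⟪e k, v⟫_𝕜 := by
  obtain ⟨x, hx⟩ := mem_span_range_iff_exists_fun 𝕜 |>.mp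
    ((span 𝕜 (Set.range e)).starProjection_apply v ▸ coe_mem _)
  refine ⟨x, funext fun k => ?_⟩
  rw [← inner_sum_smul_eq_gram_mulVec, hx, ← inner_starProjection_left_eq_right,
    (starProjection_eq_self_iff (K := span 𝕜 (Set.range e))).mpr (subset_span ⟨k, rfl⟩)]

theorem starProjection_span_range_eq_sum_of_gram_mul_mul_gram {B : Matrix ι ι 𝕜}
    (hB : gram 𝕜 e * B * gram 𝕜 e = gram 𝕜 e) (v : E) :
    (span 𝕜 (Set.range e)).starProjection v = ∑ i, (B *ᵥ fun k => ⟪e k, v⟫_𝕜) i • e i := by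
  obtain ⟨x, hx⟩ := exists_gram_mulVec_eq_inner (𝕜 := 𝕜) e v
  refine starProjection_span_range_eq_of_inner_eq (𝕜 := 𝕜) e
    (sum_mem fun i _ => smul_mem _ _ (subset_span ⟨i, rfl⟩)) fun k => ?_
  rw [inner_sum_smul_eq_gram_mulVec, ← hx, mulVec_mulVec, mulVec_mulVec, hB, hx]

end

theorem gram_generalized_inverse_projection
    {d : ℕ} {V : Type*} [NormedAddCommGroup V] [InnerProductSpace ℝ V]
    [FiniteDimensional ℝ V] (e : Fin d → V)
    (G B : Matrix (Fin d) (Fin d) ℝ)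
    (hG : ∀ i j, G i j = ⟪e i, e j⟫)
    (hB : G * B * G = G)
    (ω : V →ₗ[ℝ] ℝ) (v : V) (hv : ∀ w : V, ⟪v, w⟫ = ω w) :
    (Submodule.orthogonalProjection (Submodule.span ℝ (Set.range e)) v : V)
      = ∑ i, ∑ j, (B i j * ω (e j)) • e i := by
  obtain rfl : G = gram ℝ e := Matrix.ext hG
  have hω : (fun k => ⟪e k, v⟫) = fun k => ω (e k) := funext fun k => by rw [real_inner_comm, hv]
  rw [← starProjection_apply, starProjection_span_range_eq_sum_of_gram_mul_mul_gram e hB, hω]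
  simp only [mulVec, dotProduct, Finset.sum_smul]
end

section
/- Let E be a finite-dimensional real inner product space, let φ : (Fin d → ℝ) → E be differentiable at ξ, and let L : E → ℝ be differentiable at p = φ ξ. Set ∂ i = fderiv ℝ φ ξ (Pi.single i 1) for i : Fin d, let G be the Gram matrix of the family ∂, let ∇L : Fin d → ℝ be the vector of coordinate derivatives (∇L) i = fderiv ℝ (L ∘ φ) ξ (Pi.single i 1), and let B be any generalized inverse of G. Then ∑ i, (B.mulVec ∇L) i • ∂ i equals the orthogonal projection of the gradient of L at p onto the subspace Submodule.span ℝ (Set.range ∂). -/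
/-!
By the chain rule, `∇L` is the vector `b` of inner products `⟪∂ j, grad L p⟫`. These do not change
when `grad L p` is replaced by its projection `∑ i, c i • ∂ i` onto the span, so `b = G c`. Then
`x = ∑ i, (B b) i • ∂ i` lies in the span and satisfies `⟪∂ j, x⟫ = (G B G c) j = (G c) j = b j`,
i.e. `grad L p - x` is orthogonal to the span, which characterizes the projection.
-/

open scoped RealInnerProductSpace

open Matrix Submodule

section GramProjection

variable {𝕜 E ι : Type*} [RCLike 𝕜] [NormedAddCommGroup E] [InnerProductSpace 𝕜 E]

theorem inner_sum_smul_eq_gram_mulVec_s1 [Fintype ι] (v : ι → E) (c : ι → 𝕜) (j : ι) :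
    inner 𝕜 (v j) (∑ i, c i • v i) = (gram 𝕜 v *ᵥ c) j := by
  simp [inner_sum, inner_smul_right, mulVec, dotProduct, mul_comm]

theorem starProjection_span_range_eq_of_inner_eq_s1 (v : ι → E)
    [(span 𝕜 (Set.range v)).HasOrthogonalProjection] {u x : E}
    (hx : x ∈ span 𝕜 (Set.range v)) (hinner : ∀ j, inner 𝕜 (v j) x = inner 𝕜 (v j) u) :
    (span 𝕜 (Set.range v)).starProjection u = x := by
  refine eq_starProjection_of_mem_of_inner_eq_zero hx fun w hw ↦ ?_
  have hle : span 𝕜 (Set.range v) ≤ LinearMap.ker (innerₛₗ 𝕜 (u - x)) := by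
    rw [span_le]
    rintro _ ⟨j, rfl⟩
    rw [SetLike.mem_coe, LinearMap.mem_ker, innerₛₗ_apply_apply, inner_sub_left,
      ← inner_conj_symm, ← inner_conj_symm x, hinner, sub_self]
  exact hle hw

theorem exists_gram_mulVec_eq_inner_s1 [Fintype ι] (v : ι → E)
    [(span 𝕜 (Set.range v)).HasOrthogonalProjection] (u : E) :
    ∃ c, gram 𝕜 v *ᵥ c = fun j ↦ inner 𝕜 (v j) u := by
  obtain ⟨c, hc⟩ := (mem_span_range_iff_exists_fun 𝕜).1
    ((span 𝕜 (Set.range v)).starProjection_apply_mem u)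
  refine ⟨c, funext fun j ↦ ?_⟩
  rw [← inner_sum_smul_eq_gram_mulVec_s1, hc, ← inner_starProjection_left_eq_right,
    starProjection_eq_self_iff.2 (subset_span (Set.mem_range_self j))]

theorem sum_mulVec_inner_smul_eq_starProjection_of_gram_mul_mul_gram [Fintype ι] (v : ι → E)
    [(span 𝕜 (Set.range v)).HasOrthogonalProjection] (u : E) {B : Matrix ι ι 𝕜}
    (hB : gram 𝕜 v * B * gram 𝕜 v = gram 𝕜 v) :
    ∑ i, (B *ᵥ fun j ↦ inner 𝕜 (v j) u) i • v i = (span 𝕜 (Set.range v)).starProjection u := by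
  obtain ⟨c, hc⟩ := exists_gram_mulVec_eq_inner_s1 (𝕜 := 𝕜) v u
  refine (starProjection_span_range_eq_of_inner_eq_s1 v ?_ fun j ↦ ?_).symm
  · exact sum_mem fun i _ ↦ smul_mem _ _ (subset_span (Set.mem_range_self i))
  · rw [inner_sum_smul_eq_gram_mulVec_s1, ← hc, mulVec_mulVec, mulVec_mulVec, hB]
    exact congrFun hc j

end GramProjection

theorem inner_gradient_fderiv_apply_eq_fderiv_comp_apply {E F : Type*} [NormedAddCommGroup E]
    [InnerProductSpace ℝ E] [CompleteSpace E] [NormedAddCommGroup F] [NormedSpace ℝ F]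
    {φ : F → E} {L : E → ℝ} {x : F} (hφ : DifferentiableAt ℝ φ x)
    (hL : DifferentiableAt ℝ L (φ x)) (w : F) :
    ⟪gradient L (φ x), fderiv ℝ φ x w⟫ = fderiv ℝ (L ∘ φ) x w := by
  rw [fderiv_comp x hL hφ, gradient, InnerProductSpace.toDual_symm_apply,
    ContinuousLinearMap.comp_apply]

theorem natural_parameter_gradient_pushforward_eq_projection_of_gradient
    {d : ℕ} {E : Type*} [NormedAddCommGroup E] [InnerProductSpace ℝ E]
    [FiniteDimensional ℝ E]
    (φ : (Fin d → ℝ) → E) (ξ : Fin d → ℝ) (hφ : DifferentiableAt ℝ φ ξ)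
    (L : E → ℝ) (p : E) (hp : p = φ ξ) (hL : DifferentiableAt ℝ L p)
    (par : Fin d → E) (hpar : ∀ i, par i = fderiv ℝ φ ξ (Pi.single i 1))
    (G : Matrix (Fin d) (Fin d) ℝ) (hG : ∀ i j, G i j = ⟪par i, par j⟫)
    (nablaL : Fin d → ℝ) (hnabla : ∀ i, nablaL i = fderiv ℝ (L ∘ φ) ξ (Pi.single i 1))
    (B : Matrix (Fin d) (Fin d) ℝ) (hB : G * B * G = G) :
    ∑ i, (B.mulVec nablaL) i • par i
      = (Submodule.orthogonalProjectionOnto (Submodule.span ℝ (Set.range par)) (gradient L p) : E) := by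
  subst hp
  have hgram : G = gram ℝ par := Matrix.ext hG
  have hnabla_inner : nablaL = fun j ↦ ⟪par j, gradient L (φ ξ)⟫ := funext fun j ↦ by
    rw [hnabla, hpar, real_inner_comm, inner_gradient_fderiv_apply_eq_fderiv_comp_apply hφ hL]
  rw [hnabla_inner, coe_orthogonalProjectionOnto_apply]
  exact sum_mulVec_inner_smul_eq_starProjection_of_gram_mul_mul_gram par _ (hgram ▸ hB)
end

section
/- Let E be a finite-dimensional real inner product space, let φ : (Fin d → ℝ) → E be differentiable at ξ, let f : (Fin d → ℝ) → (Fin d → ℝ) be differentiable at θ with f θ = ξ and with fderiv ℝ f θ a bijective linear map, let ψ = φ ∘ f, and let L : E → ℝ be differentiable at p = φ ξ. Define ∂ i = fderiv ℝ φ ξ (Pi.single i 1), the Gram matrix G of the family ∂, and (∇_ξ L) i = fderiv ℝ (L ∘ φ) ξ (Pi.single i 1); analogously define ∂' j = fderiv ℝ ψ θ (Pi.single j 1), the Gram matrix G' of the family ∂', and (∇_θ L) j = fderiv ℝ (L ∘ ψ) θ (Pi.single j 1). Then for any generalized inverse B of G and any generalized inverse B' of G' one has ∑ j, (B'.mulVec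 (∇_θ L)) j • ∂' j = ∑ i, (B.mulVec (∇_ξ L)) i • ∂ i. -/
/-!
For a family `v` with Gram matrix `G` and any generalized inverse `B`, the vector
`∑ i, (B *ᵥ n) i • v i` with `n j = ⟪v j, w⟫` equals `w` whenever `w ∈ span (range v)`:
writing `w = ∑ c i • v i` gives `n = G *ᵥ c`, and `G *ᵥ (B *ᵥ G *ᵥ c - c) = 0` forces
`∑ (B *ᵥ G *ᵥ c - c) i • v i = 0` since the Gram form is the squared norm. Taking for `w` the
Riesz representative of `dL` on the span of the `∂ i` shows that both sides equal `w`, because a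
reparametrisation with surjective differential does not change that span (the image of `dφ`).
-/

open scoped InnerProductSpace RealInnerProductSpace

open Matrix Submodule Set

section Gram

variable {𝕜 ι E : Type*} [RCLike 𝕜] [Fintype ι] [NormedAddCommGroup E]
  [InnerProductSpace 𝕜 E]

theorem Matrix.gram_mulVec_apply (v : ι → E) (c : ι → 𝕜) (j : ι) :
    (gram 𝕜 v *ᵥ c) j = ⟪v j, ∑ i, c i • v i⟫_𝕜 := by
  simp [mulVec, dotProduct, inner_sum, inner_smul_right, mul_comm]

theorem Matrix.sum_smul_eq_zero_of_gram_mulVec_eq_zero {v : ι → E} {z : ι → 𝕜}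
    (hz : gram 𝕜 v *ᵥ z = 0) : ∑ i, z i • v i = 0 := by
  have h := star_dotProduct_gram_mulVec v z z
  rw [hz, dotProduct_zero, eq_comm] at h
  exact inner_self_eq_zero.mp h

theorem Matrix.sum_smul_mulVec_gram_mulVec_eq {v : ι → E} {B : Matrix ι ι 𝕜}
    (hB : gram 𝕜 v * B * gram 𝕜 v = gram 𝕜 v) (c : ι → 𝕜) :
    ∑ i, (B *ᵥ (gram 𝕜 v *ᵥ c)) i • v i = ∑ i, c i • v i := by
  have hker : gram 𝕜 v *ᵥ (B *ᵥ (gram 𝕜 v *ᵥ c) - c) = 0 := by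
    rw [mulVec_sub, mulVec_mulVec, mulVec_mulVec, hB, sub_self]
  simpa [sub_smul, Finset.sum_sub_distrib, sub_eq_zero] using
    sum_smul_eq_zero_of_gram_mulVec_eq_zero hker

theorem Matrix.sum_smul_mulVec_inner_eq_of_mem_span {v : ι → E} {B : Matrix ι ι 𝕜}
    (hB : gram 𝕜 v * B * gram 𝕜 v = gram 𝕜 v) {w : E} (hw : w ∈ span 𝕜 (range v)) :
    ∑ i, (B *ᵥ fun j ↦ ⟪v j, w⟫_𝕜) i • v i = w := by
  obtain ⟨c, rfl⟩ := (mem_span_range_iff_exists_fun 𝕜).mp hw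
  rw [← funext (gram_mulVec_apply v c), sum_smul_mulVec_gram_mulVec_eq hB]

end Gram

theorem Submodule.exists_mem_forall_inner_eq {𝕜 E : Type*} [RCLike 𝕜] [NormedAddCommGroup E]
    [InnerProductSpace 𝕜 E] (K : Submodule 𝕜 E) [CompleteSpace K] (ℓ : E →L[𝕜] 𝕜) :
    ∃ w ∈ K, ∀ u ∈ K, ⟪w, u⟫_𝕜 = ℓ u :=
  ⟨(InnerProductSpace.toDual 𝕜 K).symm (ℓ.comp K.subtypeL), coe_mem _,
    fun u hu ↦ InnerProductSpace.toDual_symm_apply (x := (⟨u, hu⟩ : K))⟩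

theorem LinearMap.span_range_apply_single {R ι M : Type*} [CommSemiring R] [Fintype ι]
    [DecidableEq ι] [AddCommMonoid M] [Module R M] (T : (ι → R) →ₗ[R] M) :
    span R (Set.range fun i ↦ T (Pi.single i 1)) = LinearMap.range T := by
  have : (fun i ↦ T (Pi.single i 1)) = T ∘ Pi.basisFun R ι := by
    ext i; simp
  rw [this, Set.range_comp, span_image, (Pi.basisFun R ι).span_eq, LinearMap.range_eq_map]

theorem span_range_fderiv_comp_apply_single {ι κ E : Type*} [Fintype ι] [DecidableEq ι]
    [Fintype κ] [DecidableEq κ] [NormedAddCommGroup E] [NormedSpace ℝ E]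
    {φ : (κ → ℝ) → E} {f : (ι → ℝ) → (κ → ℝ)} {θ : ι → ℝ}
    (hφ : DifferentiableAt ℝ φ (f θ)) (hf : DifferentiableAt ℝ f θ)
    (hsurj : Function.Surjective (fderiv ℝ f θ)) :
    span ℝ (range fun j ↦ fderiv ℝ (φ ∘ f) θ (Pi.single j 1)) =
      span ℝ (range fun i ↦ fderiv ℝ φ (f θ) (Pi.single i 1)) := by
  let Dφ : (κ → ℝ) →ₗ[ℝ] E := fderiv ℝ φ (f θ)
  let Df : (ι → ℝ) →ₗ[ℝ] (κ → ℝ) := fderiv ℝ f θ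
  calc span ℝ (range fun j ↦ fderiv ℝ (φ ∘ f) θ (Pi.single j 1))
      = LinearMap.range (Dφ ∘ₗ Df) := by
        rw [fderiv_comp θ hφ hf, ← LinearMap.span_range_apply_single]; rfl
    _ = LinearMap.range Dφ :=
        LinearMap.range_comp_of_range_eq_top _ (LinearMap.range_eq_top_of_surjective _ hsurj)
    _ = span ℝ (range fun i ↦ fderiv ℝ φ (f θ) (Pi.single i 1)) :=
        (LinearMap.span_range_apply_single Dφ).symm

theorem natural_parameter_gradient_reparametrisation_invariant_on_model_general
    {d : ℕ} {E : Type*} [NormedAddCommGroup E] [InnerProductSpace ℝ E]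
    (φ : (Fin d → ℝ) → E) (f : (Fin d → ℝ) → (Fin d → ℝ))
    (ξ θ : Fin d → ℝ) (hfθ : f θ = ξ)
    (hφ : DifferentiableAt ℝ φ ξ) (hf : DifferentiableAt ℝ f θ)
    (hbij : Function.Bijective (fderiv ℝ f θ))
    (ψ : (Fin d → ℝ) → E) (hψ : ψ = φ ∘ f)
    (L : E → ℝ) (p : E) (hp : p = φ ξ) (hL : DifferentiableAt ℝ L p)
    (par : Fin d → E) (hpar : ∀ i, par i = fderiv ℝ φ ξ (Pi.single i 1))
    (G : Matrix (Fin d) (Fin d) ℝ) (hG : ∀ i j, G i j = ⟪par i, par j⟫)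
    (nablaξ : Fin d → ℝ) (hnablaξ : ∀ i, nablaξ i = fderiv ℝ (L ∘ φ) ξ (Pi.single i 1))
    (par' : Fin d → E) (hpar' : ∀ j, par' j = fderiv ℝ ψ θ (Pi.single j 1))
    (G' : Matrix (Fin d) (Fin d) ℝ) (hG' : ∀ i j, G' i j = ⟪par' i, par' j⟫)
    (nablaθ : Fin d → ℝ) (hnablaθ : ∀ j, nablaθ j = fderiv ℝ (L ∘ ψ) θ (Pi.single j 1))
    (B B' : Matrix (Fin d) (Fin d) ℝ)
    (hB : G * B * G = G) (hB' : G' * B' * G' = G') :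
    ∑ j, (B'.mulVec nablaθ) j • par' j = ∑ i, (B.mulVec nablaξ) i • par i := by
  subst hfθ hψ hp
  obtain rfl : G = gram ℝ par := Matrix.ext hG
  obtain rfl : G' = gram ℝ par' := Matrix.ext hG'
  have hspan : span ℝ (range par') = span ℝ (range par) := by
    rw [funext hpar, funext hpar']
    exact span_range_fderiv_comp_apply_single hφ hf hbij.2
  have : FiniteDimensional ℝ (span ℝ (range par)) := .span_of_finite ℝ (finite_range _)
  obtain ⟨w, hw_mem, hw⟩ :=
    (span ℝ (range par)).exists_mem_forall_inner_eq (fderiv ℝ L (φ (f θ)))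
  have hnablaξ_inner : nablaξ = fun i ↦ ⟪par i, w⟫ := funext fun i ↦ by
    rw [hnablaξ i, real_inner_comm, hw _ (subset_span ⟨i, rfl⟩), fderiv_comp _ hL hφ,
      hpar i]; rfl
  have hnablaθ_inner : nablaθ = fun j ↦ ⟪par' j, w⟫ := funext fun j ↦ by
    rw [hnablaθ j, real_inner_comm, hw _ (hspan ▸ subset_span ⟨j, rfl⟩),
      fderiv_comp (g := L) (f := φ ∘ f) θ hL (hφ.comp θ hf), hpar' j]; rfl
  rw [hnablaξ_inner, hnablaθ_inner, sum_smul_mulVec_inner_eq_of_mem_span hB hw_mem,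
    sum_smul_mulVec_inner_eq_of_mem_span hB' (hspan ▸ hw_mem)]

theorem natural_parameter_gradient_reparametrisation_invariant_on_model
    {d : ℕ} {E : Type*} [NormedAddCommGroup E] [InnerProductSpace ℝ E]
    [FiniteDimensional ℝ E]
    (φ : (Fin d → ℝ) → E) (f : (Fin d → ℝ) → (Fin d → ℝ))
    (ξ θ : Fin d → ℝ) (hfθ : f θ = ξ)
    (hφ : DifferentiableAt ℝ φ ξ) (hf : DifferentiableAt ℝ f θ)
    (hbij : Function.Bijective (fderiv ℝ f θ))
    (ψ : (Fin d → ℝ) → E) (hψ : ψ = φ ∘ f)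
    (L : E → ℝ) (p : E) (hp : p = φ ξ) (hL : DifferentiableAt ℝ L p)
    (par : Fin d → E) (hpar : ∀ i, par i = fderiv ℝ φ ξ (Pi.single i 1))
    (G : Matrix (Fin d) (Fin d) ℝ) (hG : ∀ i j, G i j = ⟪par i, par j⟫)
    (nablaξ : Fin d → ℝ) (hnablaξ : ∀ i, nablaξ i = fderiv ℝ (L ∘ φ) ξ (Pi.single i 1))
    (par' : Fin d → E) (hpar' : ∀ j, par' j = fderiv ℝ ψ θ (Pi.single j 1))
    (G' : Matrix (Fin d) (Fin d) ℝ) (hG' : ∀ i j, G' i j = ⟪par' i, par' j⟫)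
    (nablaθ : Fin d → ℝ) (hnablaθ : ∀ j, nablaθ j = fderiv ℝ (L ∘ ψ) θ (Pi.single j 1))
    (B B' : Matrix (Fin d) (Fin d) ℝ)
    (hB : G * B * G = G) (hB' : G' * B' * G' = G') :
    ∑ j, (B'.mulVec nablaθ) j • par' j = ∑ i, (B.mulVec nablaξ) i • par i :=
  natural_parameter_gradient_reparametrisation_invariant_on_model_general φ f ξ θ hfθ hφ hf hbij ψ
    hψ L p hp hL par hpar G hG nablaξ hnablaξ par' hpar' G' hG' nablaθ hnablaθ B B' hB hB'
end

section
/- Let V be a finite-dimensional real inner product space, let e : Fin d → V be a family of vectors, let ω : V →ₗ[ℝ] ℝ be a linear functional, and let F be an invertible d × d real matrix. Define e' : Fin d → V by e' i = ∑ j, F i j • e j. Let G and G' be the Gram matrices of e and e' respectively, and let B and B' be generalized inverses of G and G' respectively. Then ∑ i, (B'.mulVec (fun j => ω (e' j))) i • e' i = ∑ i, (B.mulVec (fun j => ω (e j))) i • e i. -/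
/-!
Both sides are the Riesz representative of `ω` restricted to the common span of
`e` and `e'`. Write that representative as `∑ yᵢ eᵢ`; then `ω ∘ e = G y`, and a
generalized inverse `B` of `G` gives `G (B G y - y) = 0`. Since `‖∑ zᵢ eᵢ‖² = zᵀ G z`,
the combinations of the `eᵢ` with coefficients `B G y` and `y` coincide.
-/

open scoped RealInnerProductSpace InnerProductSpace
open Matrix Submodule

section Gram

variable {𝕜 V ι : Type*} [RCLike 𝕜] [NormedAddCommGroup V] [InnerProductSpace 𝕜 V]
  [Fintype ι]

theorem inner_linearCombination_eq_gram_mulVec (e : ι → V) (z : ι → 𝕜) (j : ι) :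
    ⟪e j, Fintype.linearCombination 𝕜 e z⟫_𝕜 = (gram 𝕜 e *ᵥ z) j := by
  simp [Fintype.linearCombination_apply, inner_sum, inner_smul_right, mulVec, dotProduct,
    mul_comm]

theorem linearCombination_eq_zero_of_gram_mulVec_eq_zero {e : ι → V} {z : ι → 𝕜}
    (hz : gram 𝕜 e *ᵥ z = 0) : Fintype.linearCombination 𝕜 e z = 0 := by
  have h := star_dotProduct_gram_mulVec e z z
  rw [hz, dotProduct_zero, eq_comm, inner_self_eq_zero] at h
  simpa [Fintype.linearCombination_apply] using h

theorem linearCombination_mulVec_gram_mulVec {e : ι → V} {B : Matrix ι ι 𝕜}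
    (hB : gram 𝕜 e * B * gram 𝕜 e = gram 𝕜 e) (y : ι → 𝕜) :
    Fintype.linearCombination 𝕜 e (B *ᵥ gram 𝕜 e *ᵥ y) =
      Fintype.linearCombination 𝕜 e y := by
  rw [← sub_eq_zero, ← map_sub]
  refine linearCombination_eq_zero_of_gram_mulVec_eq_zero ?_
  rw [mulVec_sub, mulVec_mulVec, mulVec_mulVec, hB, sub_self]

theorem exists_inner_linearCombination_eq (e : ι → V) (ω : V →ₗ[𝕜] 𝕜) :
    ∃ y, ∀ s ∈ span 𝕜 (Set.range e),
      ⟪Fintype.linearCombination 𝕜 e y, s⟫_𝕜 = ω s := by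
  set K := span 𝕜 (Set.range e)
  have : FiniteDimensional 𝕜 K := FiniteDimensional.span_of_finite 𝕜 (Set.finite_range e)
  set p : K := (InnerProductSpace.toDual 𝕜 K).symm (ω.domRestrict K).toContinuousLinearMap
  obtain ⟨y, hy⟩ : (p : V) ∈ LinearMap.range (Fintype.linearCombination 𝕜 e) := by
    rw [Fintype.range_linearCombination]; exact p.2
  refine ⟨y, fun s hs => ?_⟩
  rw [hy]
  exact InnerProductSpace.toDual_symm_apply (x := (⟨s, hs⟩ : K))

theorem eq_of_mem_of_forall_inner_eq {K : Submodule 𝕜 V} {x y : V} (hx : x ∈ K) (hy : y ∈ K)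
    (h : ∀ s ∈ K, ⟪s, x⟫_𝕜 = ⟪s, y⟫_𝕜) : x = y := by
  rw [← sub_eq_zero, ← inner_self_eq_zero (𝕜 := 𝕜), inner_sub_right, h _ (sub_mem hx hy),
    sub_self]

end Gram

theorem span_range_linearCombination_eq_of_isUnit {R M ι : Type*} [CommRing R] [AddCommGroup M]
    [Module R M] [Fintype ι] [DecidableEq ι] (e : ι → M) {F : Matrix ι ι R} (hF : IsUnit F) :
    span R (Set.range fun i => Fintype.linearCombination R e (F i)) = span R (Set.range e) := by
  have hcomp : Fintype.linearCombination R (fun i => Fintype.linearCombination R e (F i)) =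
      Fintype.linearCombination R e ∘ₗ F.vecMulLinear := by
    ext i
    simp [Fintype.linearCombination_apply, Pi.single_apply]
  rw [← Fintype.range_linearCombination, ← Fintype.range_linearCombination, hcomp,
    LinearMap.range_comp_of_range_eq_top]
  exact LinearMap.range_eq_top.mpr (vecMul_surjective_iff_isUnit.mpr hF)

section NaturalGradient

variable {V ι : Type*} [NormedAddCommGroup V] [InnerProductSpace ℝ V] [Fintype ι]

def naturalGradient (e : ι → V) (B : Matrix ι ι ℝ) (ω : V →ₗ[ℝ] ℝ) : V :=
  Fintype.linearCombination ℝ e (B *ᵥ fun j => ω (e j))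

theorem naturalGradient_mem_span (e : ι → V) (B : Matrix ι ι ℝ) (ω : V →ₗ[ℝ] ℝ) :
    naturalGradient e B ω ∈ span ℝ (Set.range e) := by
  rw [← Fintype.range_linearCombination]; exact LinearMap.mem_range_self _ _

theorem inner_naturalGradient {e : ι → V} {B : Matrix ι ι ℝ}
    (hB : gram ℝ e * B * gram ℝ e = gram ℝ e) (ω : V →ₗ[ℝ] ℝ) {s : V}
    (hs : s ∈ span ℝ (Set.range e)) :
    ⟪s, naturalGradient e B ω⟫ = ω s := by
  obtain ⟨y, hy⟩ := exists_inner_linearCombination_eq e ω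
  have hGy : gram ℝ e *ᵥ y = fun j => ω (e j) := funext fun j => by
    rw [← inner_linearCombination_eq_gram_mulVec, real_inner_comm]
    exact hy _ (subset_span ⟨j, rfl⟩)
  rw [naturalGradient, ← hGy, linearCombination_mulVec_gram_mulVec hB, real_inner_comm]
  exact hy s hs

end NaturalGradient

theorem natural_parameter_gradient_invariant_under_invertible_change_of_family_general
    {d : ℕ} {V : Type*} [NormedAddCommGroup V] [InnerProductSpace ℝ V]
    (e : Fin d → V) (ω : V →ₗ[ℝ] ℝ)
    (F : Matrix (Fin d) (Fin d) ℝ) (hF : IsUnit F)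
    (e' : Fin d → V) (he' : ∀ i, e' i = ∑ j, F i j • e j)
    (G G' : Matrix (Fin d) (Fin d) ℝ)
    (hG : ∀ i j, G i j = ⟪e i, e j⟫) (hG' : ∀ i j, G' i j = ⟪e' i, e' j⟫)
    (B B' : Matrix (Fin d) (Fin d) ℝ)
    (hB : G * B * G = G) (hB' : G' * B' * G' = G') :
    ∑ i, (B'.mulVec (fun j => ω (e' j))) i • e' i
      = ∑ i, (B.mulVec (fun j => ω (e j))) i • e i := by
  obtain rfl : G = gram ℝ e := Matrix.ext hG
  obtain rfl : G' = gram ℝ e' := Matrix.ext hG'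
  have hspan : span ℝ (Set.range e') = span ℝ (Set.range e) := by
    rw [← span_range_linearCombination_eq_of_isUnit e hF, funext he']
    simp only [Fintype.linearCombination_apply]
  simp only [← Fintype.linearCombination_apply]
  change naturalGradient e' B' ω = naturalGradient e B ω
  refine eq_of_mem_of_forall_inner_eq (hspan ▸ naturalGradient_mem_span e' B' ω)
    (naturalGradient_mem_span e B ω) fun s hs => ?_
  rw [inner_naturalGradient hB ω hs, inner_naturalGradient hB' ω (hspan ▸ hs)]

theorem natural_parameter_gradient_invariant_under_invertible_change_of_family
    {d : ℕ} {V : Type*} [NormedAddCommGroup V] [InnerProductSpace ℝ V]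
    [FiniteDimensional ℝ V]
    (e : Fin d → V) (ω : V →ₗ[ℝ] ℝ)
    (F : Matrix (Fin d) (Fin d) ℝ) (hF : IsUnit F)
    (e' : Fin d → V) (he' : ∀ i, e' i = ∑ j, F i j • e j)
    (G G' : Matrix (Fin d) (Fin d) ℝ)
    (hG : ∀ i j, G i j = ⟪e i, e j⟫) (hG' : ∀ i j, G' i j = ⟪e' i, e' j⟫)
    (B B' : Matrix (Fin d) (Fin d) ℝ)
    (hB : G * B * G = G) (hB' : G' * B' * G' = G') :
    ∑ i, (B'.mulVec (fun j => ω (e' j))) i • e' i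
      = ∑ i, (B.mulVec (fun j => ω (e j))) i • e i :=
  natural_parameter_gradient_invariant_under_invertible_change_of_family_general e ω F hF e' he' G
    G' hG hG' B B' hB hB'
end

section
/- Let V be a real inner product space, let e : Fin d → V be a family of vectors with Gram matrix G, let F be an invertible d × d real matrix, let w : Fin d → ℝ lie in the range of the linear map y ↦ G.mulVec y, let B be a generalized inverse of G, and let B' be a generalized inverse of F * G * Fᵀ. Then ∑ i, (Fᵀ.mulVec (B'.mulVec (F.mulVec w))) i • e i = ∑ i, (B.mulVec w) i • e i. -/
open scoped RealInnerProductSpace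
open Matrix

lemma gram_kernel_sum_eq_zero
    {d : ℕ} {V : Type*} [NormedAddCommGroup V] [InnerProductSpace ℝ V]
    (e : Fin d → V) (G : Matrix (Fin d) (Fin d) ℝ)
    (hG : ∀ i j, G i j = ⟪e i, e j⟫)
    (x : Fin d → ℝ) (hx : G.mulVec x = 0) : ∑ i, x i • e i = 0 := by
  have h : ⟪∑ i, x i • e i, ∑ i, x i • e i⟫ = 0 := by
    rw [inner_sum]
    have : ∀ j, ⟪∑ i, x i • e i, x j • e j⟫ = x j * (G.mulVec x) j := by
      intro j
      rw [sum_inner, Matrix.mulVec]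
      simp only [real_inner_smul_left, real_inner_smul_right, dotProduct]
      rw [Finset.mul_sum]
      congr 1; ext i
      rw [hG j i, real_inner_comm]
      ring
    simp only [this, hx, Pi.zero_apply, mul_zero, Finset.sum_const_zero]
  exact inner_self_eq_zero.mp h

theorem reparametrised_natural_parameter_gradient_eq_on_model
    {d : ℕ} {V : Type*} [NormedAddCommGroup V] [InnerProductSpace ℝ V]
    (e : Fin d → V) (G : Matrix (Fin d) (Fin d) ℝ)
    (hG : ∀ i j, G i j = ⟪e i, e j⟫)
    (F : Matrix (Fin d) (Fin d) ℝ) (hF : IsUnit F)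
    (w : Fin d → ℝ) (hw : w ∈ Set.range (fun y : Fin d → ℝ => G.mulVec y))
    (B B' : Matrix (Fin d) (Fin d) ℝ)
    (hB : G * B * G = G)
    (hB' : (F * G * Fᵀ) * B' * (F * G * Fᵀ) = F * G * Fᵀ) :
    ∑ i, (Fᵀ.mulVec (B'.mulVec (F.mulVec w))) i • e i
      = ∑ i, (B.mulVec w) i • e i := by
  obtain ⟨y, hy⟩ := hw
  obtain ⟨u, hu⟩ := hF
  set Fi : Matrix (Fin d) (Fin d) ℝ := ↑u⁻¹ with hFi
  have hFF : F * Fi = 1 := by rw [hFi, ← hu]; exact u.mul_inv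
  have hFiF : Fi * F = 1 := by rw [hFi, ← hu]; exact u.inv_mul
  have hkey : G * Fᵀ * B' * F * G = G := by
    have h1 : Fi * (F * G * Fᵀ * B' * (F * G * Fᵀ)) * Fiᵀ
        = Fi * (F * G * Fᵀ) * Fiᵀ := by rw [hB']
    have h2 : Fᵀ * Fiᵀ = 1 := by rw [← Matrix.transpose_mul, hFiF, Matrix.transpose_one]
    calc G * Fᵀ * B' * F * G
        = (Fi * F) * G * Fᵀ * B' * (F * G * (Fᵀ * Fiᵀ)) := by
          rw [hFiF, h2]; noncomm_ring
      _ = Fi * (F * G * Fᵀ * B' * (F * G * Fᵀ)) * Fiᵀ := by noncomm_ring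
      _ = Fi * (F * G * Fᵀ) * Fiᵀ := h1
      _ = (Fi * F) * G * (Fᵀ * Fiᵀ) := by noncomm_ring
      _ = G := by rw [hFiF, h2, Matrix.one_mul, Matrix.mul_one]
  set a := Fᵀ.mulVec (B'.mulVec (F.mulVec w)) with ha
  set b := B.mulVec w with hb
  have hker : G.mulVec (a - b) = 0 := by
    have h3 : G.mulVec a = w := by
      rw [ha, ← hy]
      simp only [Matrix.mulVec_mulVec]
      rw [show G * (Fᵀ * (B' * (F * G))) = G * Fᵀ * B' * F * G by noncomm_ring, hkey]
    have h4 : G.mulVec b = w := by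
      rw [hb, ← hy]
      simp only [Matrix.mulVec_mulVec]
      rw [← Matrix.mul_assoc, hB]
    rw [Matrix.mulVec_sub, h3, h4, sub_self]
  have hzero : ∑ i, (a - b) i • e i = 0 := gram_kernel_sum_eq_zero e G hG _ hker
  have : ∑ i, a i • e i - ∑ i, b i • e i = 0 := by
    rw [← Finset.sum_sub_distrib]
    simpa [sub_smul] using hzero
  exact sub_eq_zero.mp this
end

section
/- Let G be a d × d real matrix, let F be an invertible d × d real matrix, and let B' be the Moore–Penrose inverse of A = F * G * Fᵀ. Let w : Fin d → ℝ lie in the range of y ↦ G.mulVec y and set y* = Fᵀ.mulVec (B'.mulVec (F.mulVec w)). Then G.mulVec y* = w, and for every y : Fin d → ℝ with G.mulVec y = w one has ‖(F⁻¹)ᵀ.mulVec y*‖ ≤ ‖(F⁻¹)ᵀ.mulVec y‖, where ‖·‖ denotes the Euclidean norm on EuclideanSpace ℝ (Fin d). -/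
open Matrix

lemma proj_dot_le_aux {d : ℕ} (P : Matrix (Fin d) (Fin d) ℝ)
    (hsym : Pᵀ = P) (hidem : P * P = P) (u : Fin d → ℝ) :
    (P.mulVec u) ⬝ᵥ (P.mulVec u) ≤ u ⬝ᵥ u := by
  have key : (P.mulVec u) ⬝ᵥ (P.mulVec u) = (P.mulVec u) ⬝ᵥ u := by
    rw [dotProduct_mulVec]
    congr 1
    rw [← mulVec_transpose, hsym, mulVec_mulVec, hidem]
  have hnn : (0:ℝ) ≤ (u - P.mulVec u) ⬝ᵥ (u - P.mulVec u) := by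
    apply Finset.sum_nonneg
    intro i _
    exact mul_self_nonneg _
  have expand : (u - P.mulVec u) ⬝ᵥ (u - P.mulVec u)
      = u ⬝ᵥ u - (P.mulVec u) ⬝ᵥ (P.mulVec u) := by
    rw [sub_dotProduct, dotProduct_sub, dotProduct_sub, key,
      dotProduct_comm u (P.mulVec u)]
    ring
  linarith [expand ▸ hnn]

theorem reparametrised_coefficient_vector_minimises_pushed_norm
    {d : ℕ} (G F : Matrix (Fin d) (Fin d) ℝ) (hF : IsUnit F)
    (B' : Matrix (Fin d) (Fin d) ℝ)
    (hMP1 : (F * G * Fᵀ) * B' * (F * G * Fᵀ) = F * G * Fᵀ)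
    (hMP2 : B' * (F * G * Fᵀ) * B' = B')
    (hMP3 : ((F * G * Fᵀ) * B')ᵀ = (F * G * Fᵀ) * B')
    (hMP4 : (B' * (F * G * Fᵀ))ᵀ = B' * (F * G * Fᵀ))
    (w : Fin d → ℝ) (hw : w ∈ Set.range (fun y : Fin d → ℝ => G.mulVec y))
    (ystar : Fin d → ℝ) (hystar : ystar = Fᵀ.mulVec (B'.mulVec (F.mulVec w))) :
    G.mulVec ystar = w ∧
      ∀ y : Fin d → ℝ, G.mulVec y = w →
        ‖(EuclideanSpace.equiv (Fin d) ℝ).symm ((F⁻¹)ᵀ.mulVec ystar)‖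
          ≤ ‖(EuclideanSpace.equiv (Fin d) ℝ).symm ((F⁻¹)ᵀ.mulVec y)‖ := by
  obtain ⟨y₀, hy₀⟩ := hw
  have hy₀' : G.mulVec y₀ = w := hy₀
  have hdet : IsUnit F.det := (isUnit_iff_isUnit_det F).mp hF
  have hdetT : IsUnit Fᵀ.det := by rwa [det_transpose]
  have hFiF : F⁻¹ * F = 1 := nonsing_inv_mul F hdet
  have hFFi : F * F⁻¹ = 1 := mul_nonsing_inv F hdet
  have hTiT : Fᵀ * (Fᵀ)⁻¹ = 1 := mul_nonsing_inv Fᵀ hdetT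
  have hT1 : Fᵀ * (F⁻¹)ᵀ = 1 := by
    rw [← transpose_mul, hFiF, transpose_one]
  have hT2 : (F⁻¹)ᵀ * Fᵀ = 1 := by
    rw [← transpose_mul, hFFi, transpose_one]
  set A := F * G * Fᵀ with hA
  -- the key pullback identity
  have husat : (F⁻¹)ᵀ.mulVec ystar = B'.mulVec (F.mulVec w) := by
    rw [hystar, mulVec_mulVec, hT2, one_mulVec]
  -- F.mulVec w = A.mulVec x for some x
  set x := (Fᵀ)⁻¹.mulVec y₀ with hx
  have hFw : F.mulVec w = A.mulVec x := by
    rw [hx, mulVec_mulVec, hA, Matrix.mul_assoc, Matrix.mul_assoc, hTiT,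
      Matrix.mul_one, ← mulVec_mulVec, hy₀']
  have hG : G.mulVec ystar = w := by
    have h1 : F.mulVec (G.mulVec ystar) = F.mulVec w := by
      have hMP1' := hMP1
      rw [hA] at hMP1'
      rw [hystar, hFw]
      simp only [mulVec_mulVec]
      congr 1
      rw [hA]
      simp only [← Matrix.mul_assoc] at hMP1' ⊢
      rw [hMP1']
    have := congrArg (F⁻¹.mulVec ·) h1
    simpa [mulVec_mulVec, ← Matrix.mul_assoc, hFiF] using this
  refine ⟨hG, fun y hy => ?_⟩
  -- pullback of y
  set u := (F⁻¹)ᵀ.mulVec y with hu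
  have hAu : A.mulVec u = F.mulVec w := by
    rw [hu, mulVec_mulVec, hA, Matrix.mul_assoc, Matrix.mul_assoc, hT1,
      Matrix.mul_one, ← mulVec_mulVec, hy]
  have hustar : (F⁻¹)ᵀ.mulVec ystar = (B' * A).mulVec u := by
    rw [husat, hAu.symm, mulVec_mulVec]
  have hP : ((B' * A).mulVec u) ⬝ᵥ ((B' * A).mulVec u) ≤ u ⬝ᵥ u := by
    apply proj_dot_le_aux
    · exact hMP4
    · rw [← Matrix.mul_assoc, hMP2]
  rw [hustar]
  have hnorm : ∀ v : Fin d → ℝ,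
      ‖(EuclideanSpace.equiv (Fin d) ℝ).symm v‖ = Real.sqrt (v ⬝ᵥ v) := by
    intro v
    rw [EuclideanSpace.norm_eq]
    congr 1
    simp [dotProduct, sq]
  rw [hnorm, hnorm, hu]
  exact Real.sqrt_le_sqrt hP
end

section
/- Fix d : ℕ with 1 ≤ d, a real normed vector space Z, and a set M ⊆ Z. Call a triple (U, φ, ξ) a parametrisation triple if U ⊆ (Fin d → ℝ) is open, ξ ∈ U, φ : (Fin d → ℝ) → Z is smooth on U (ContDiffOn ℝ ⊤ φ U), and φ '' U = M. Let O : Set (Fin d → ℝ) → ((Fin d → ℝ) → Z) → (Fin d → ℝ) → (Fin d → ℝ) be any function (a representation). Suppose O is parametrisation independent: for all parametrisation triples (U, φ, ξ) and (V, ψ, θ) with ψ θ = φ ξ, one has fderiv ℝ ψ θ (O V ψ θ) = fderiv ℝ φ ξ (O U φ ξ). Then for every parametrisation triple (U, φ, ξ): fderiv ℝ φ ξ (O U φ ξ) = 0. -/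
/-- A parametrisation triple of a model `M ⊆ Z`: an open set `U ⊆ ℝ^d`, a point
`ξ ∈ U`, and a map `φ` that is smooth on `U` with image `M`. -/
def IsParamTriple {d : ℕ} {Z : Type*} [NormedAddCommGroup Z] [NormedSpace ℝ Z]
    (M : Set Z) (U : Set (Fin d → ℝ)) (φ : (Fin d → ℝ) → Z) (ξ : Fin d → ℝ) : Prop :=
  IsOpen U ∧ ξ ∈ U ∧ ContDiffOn ℝ (⊤ : ℕ∞) φ U ∧ φ '' U = M

lemma cube_surj : Function.Surjective (fun t : ℝ => t ^ 3) := by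
  intro c
  rcases le_or_gt 0 c with hc | hc
  · refine ⟨c ^ ((3:ℝ)⁻¹), ?_⟩
    simp only
    rw [← Real.rpow_natCast (c ^ ((3:ℝ)⁻¹)) 3, ← Real.rpow_mul hc]
    norm_num
  · refine ⟨-((-c) ^ ((3:ℝ)⁻¹)), ?_⟩
    simp only
    rw [Odd.neg_pow (by decide), ← Real.rpow_natCast ((-c) ^ ((3:ℝ)⁻¹)) 3,
      ← Real.rpow_mul (by linarith)]
    norm_num

section Aux
variable {d : ℕ} (ξ : Fin d → ℝ)

/-- The cube reparametrisation centred so that `g 0 = ξ`. -/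
noncomputable def cubeMap (x : Fin d → ℝ) : Fin d → ℝ := fun i => ξ i + (x i) ^ 3

lemma cubeMap_zero : cubeMap ξ 0 = ξ := by
  funext i; simp [cubeMap]

lemma cubeMap_surj : Function.Surjective (cubeMap ξ) := by
  intro y
  choose f hf using cube_surj
  exact ⟨fun i => f (y i - ξ i), by funext i; simp [cubeMap, hf]⟩

lemma cubeMap_contDiff : ContDiff ℝ (⊤ : ℕ∞) (cubeMap ξ) := by
  apply contDiff_pi.2
  intro i
  refine contDiff_const.add (ContDiff.pow ?_ 3)
  exact contDiff_apply ℝ ℝ i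

lemma cubeMap_hasFDerivAt :
    HasFDerivAt (cubeMap ξ) (0 : (Fin d → ℝ) →L[ℝ] (Fin d → ℝ)) 0 := by
  apply hasFDerivAt_pi''
  intro i
  have h1 : HasFDerivAt (fun x : Fin d → ℝ => x i)
      (ContinuousLinearMap.proj (R := ℝ) (φ := fun _ : Fin d => ℝ) i) 0 :=
    hasFDerivAt_apply (𝕜 := ℝ) i (0 : Fin d → ℝ)
  have h2 : HasFDerivAt (fun x : Fin d → ℝ => (x i) ^ 3)
      (((3 : ℕ) * (0:ℝ) ^ 2) •
        ContinuousLinearMap.proj (R := ℝ) (φ := fun _ : Fin d => ℝ) i) 0 := by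
    simpa [Function.comp_def] using (hasDerivAt_pow 3 ((0 : Fin d → ℝ) i)).comp_hasFDerivAt 0 h1
  have h3 : HasFDerivAt (fun x : Fin d → ℝ => ξ i + (x i) ^ 3)
      (((3 : ℕ) * (0:ℝ) ^ 2) •
        ContinuousLinearMap.proj (R := ℝ) (φ := fun _ : Fin d => ℝ) i) 0 :=
    h2.const_add (ξ i)
  have h4 : ((ContinuousLinearMap.proj (R := ℝ) (φ := fun _ : Fin d => ℝ) i).comp
      (0 : (Fin d → ℝ) →L[ℝ] (Fin d → ℝ)) : (Fin d → ℝ) →L[ℝ] ℝ)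
      = ((3 : ℕ) * (0:ℝ) ^ 2) •
        ContinuousLinearMap.proj (R := ℝ) (φ := fun _ : Fin d => ℝ) i := by
    ext x; simp
  rw [show (fun x : Fin d → ℝ => cubeMap ξ x i) = fun x => ξ i + (x i) ^ 3 from rfl, h4]
  exact h3

end Aux

theorem no_nontrivial_parametrisation_independent_representation
    {d : ℕ} (hd : 1 ≤ d) {Z : Type*} [NormedAddCommGroup Z] [NormedSpace ℝ Z]
    (M : Set Z)
    (O : Set (Fin d → ℝ) → ((Fin d → ℝ) → Z) → (Fin d → ℝ) → (Fin d → ℝ))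
    (hO : ∀ (U : Set (Fin d → ℝ)) (φ : (Fin d → ℝ) → Z) (ξ : Fin d → ℝ)
      (V : Set (Fin d → ℝ)) (ψ : (Fin d → ℝ) → Z) (θ : Fin d → ℝ),
      IsParamTriple M U φ ξ → IsParamTriple M V ψ θ → ψ θ = φ ξ →
      fderiv ℝ ψ θ (O V ψ θ) = fderiv ℝ φ ξ (O U φ ξ)) :
    ∀ (U : Set (Fin d → ℝ)) (φ : (Fin d → ℝ) → Z) (ξ : Fin d → ℝ),
      IsParamTriple M U φ ξ → fderiv ℝ φ ξ (O U φ ξ) = 0 := by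
  intro U φ ξ hT
  obtain ⟨hUopen, hξU, hφ, hφU⟩ := hT
  set g : (Fin d → ℝ) → (Fin d → ℝ) := cubeMap ξ with hg
  set V : Set (Fin d → ℝ) := g ⁻¹' U with hV
  set ψ : (Fin d → ℝ) → Z := φ ∘ g with hψdef
  have hg0 : g 0 = ξ := cubeMap_zero ξ
  have h0V : (0 : Fin d → ℝ) ∈ V := by
    simp only [hV, Set.mem_preimage, hg0]; exact hξU
  have hVopen : IsOpen V := hUopen.preimage (cubeMap_contDiff ξ).continuous
  have hψ : ContDiffOn ℝ (⊤ : ℕ∞) ψ V :=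
    hφ.comp (cubeMap_contDiff ξ).contDiffOn (fun x hx => hx)
  have himg : ψ '' V = M := by
    rw [hψdef, Set.image_comp, hV, Set.image_preimage_eq U (cubeMap_surj ξ), hφU]
  have htrip : IsParamTriple M V ψ 0 := ⟨hVopen, h0V, hψ, himg⟩
  have heq0 : ψ 0 = φ ξ := by rw [hψdef, Function.comp_apply, hg0]
  have hkey := hO U φ ξ V ψ 0 ⟨hUopen, hξU, hφ, hφU⟩ htrip heq0
  have hφdiff : DifferentiableAt ℝ φ ξ :=
    (hφ.contDiffAt (hUopen.mem_nhds hξU)).differentiableAt (by simp)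
  have hφd : HasFDerivAt φ (fderiv ℝ φ ξ) (g 0) := by
    rw [hg0]; exact hφdiff.hasFDerivAt
  have hcomp : HasFDerivAt ψ
      ((fderiv ℝ φ ξ).comp (0 : (Fin d → ℝ) →L[ℝ] (Fin d → ℝ))) 0 :=
    hφd.comp 0 (cubeMap_hasFDerivAt ξ)
  have hzero : fderiv ℝ ψ 0 = 0 := by
    rw [hcomp.fderiv]; ext x; simp
  rw [← hkey, hzero]
  simp
end
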